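/- arXiv:1401.6963 — 5 statements merged into one kernel-verified Lean document; each statement's English description precedes it below -/
import Mathlib

section
/- (Lemma 3.) Let V be a finite type and let P be a collection of finite subsets of V with the property that whenever A, B ∈ P satisfy |A| = |B| and |A ∩ B| = |A| − 1, then A ∩ B ∈ P. Let S = 2^V \ P be the complement collection. Then S satisfies the greedoid augmentation property G3: for any A, B ∈ S with |A| > |B|, there exists an element a ∈ A \ B such that B ∪ {a} ∈ S. -/
/-!
Suppose every `insert a B` with `a ∈ A \ B` lies in `P`. Two distinct such sets have the same
size and meet in `B`, so the closure property would put `B` in `P`. Hence `A \ B` is a single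
point `a`, and since `|A| > |B|` this forces `A = insert a B ∈ P`.
-/

namespace Finset

variable {V : Type*} [DecidableEq V]

theorem insert_inter_insert_of_ne {B : Finset V} {a b : V} (ha : a ∉ B) (hb : b ∉ B)
    (hab : a ≠ b) : insert a B ∩ insert b B = B := by
  rw [insert_inter_of_notMem (by simp [hab, ha]), inter_insert_of_notMem hb, inter_self]

theorem eq_insert_of_sdiff_subset_singleton {A B : Finset V} {a : V} (h : A \ B ⊆ {a})
    (hcard : #B < #A) : A = insert a B := by
  refine eq_of_subset_of_card_le ?_ ((card_insert_le a B).trans hcard)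
  rw [insert_eq]
  exact sdiff_le_iff'.mp h

end Finset

open Finset

theorem mem_of_insert_mem_of_insert_mem {V : Type*} [DecidableEq V] {P : Set (Finset V)}
    (hP : ∀ A B : Finset V, A ∈ P → B ∈ P → A.card = B.card →
      (A ∩ B).card = A.card - 1 → A ∩ B ∈ P)
    {B : Finset V} {a b : V} (ha : a ∉ B) (hb : b ∉ B) (hab : a ≠ b)
    (haP : insert a B ∈ P) (hbP : insert b B ∈ P) : B ∈ P := by
  have hinter := insert_inter_insert_of_ne ha hb hab
  rw [← hinter]
  refine hP _ _ haP hbP ?_ ?_ <;> simp [hinter, card_insert_of_notMem, ha, hb]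

theorem complement_satisfies_G3_general {V : Type*} [DecidableEq V]
    (P : Set (Finset V))
    (hP : ∀ A B : Finset V, A ∈ P → B ∈ P → A.card = B.card →
      (A ∩ B).card = A.card - 1 → A ∩ B ∈ P)
    (A B : Finset V) (hA : A ∉ P) (hB : B ∉ P) (hcard : B.card < A.card) :
    ∃ a ∈ A \ B, insert a B ∉ P := by
  by_contra! h
  obtain ⟨a, hsingle⟩ | ⟨a, ha, b, hb, hab⟩ :=
    (sdiff_nonempty_of_card_lt_card hcard).exists_eq_singleton_or_nontrivial
  · have ha : a ∈ A \ B := by simp [hsingle]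
    exact hA (eq_insert_of_sdiff_subset_singleton hsingle.subset hcard ▸ h a ha)
  · exact hB (mem_of_insert_mem_of_insert_mem hP (mem_sdiff.mp ha).2 (mem_sdiff.mp hb).2 hab
      (h a ha) (h b hb))

/-- Lemma 3: if the family `P` of finite subsets of `V` is closed under intersecting two
members of equal cardinality whose intersection has one fewer element, then the
complement family `S = 2^V \ P` satisfies the greedoid augmentation property G3:
for `A, B ∉ P` with `|A| > |B|`, there is `a ∈ A \ B` with `B ∪ {a} ∉ P`. -/
theorem complement_satisfies_G3 {V : Type*} [Fintype V] [DecidableEq V]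
    (P : Set (Finset V))
    (hP : ∀ A B : Finset V, A ∈ P → B ∈ P → A.card = B.card →
      (A ∩ B).card = A.card - 1 → A ∩ B ∈ P)
    (A B : Finset V) (hA : A ∉ P) (hB : B ∉ P) (hcard : B.card < A.card) :
    ∃ a ∈ A \ B, insert a B ∉ P :=
  complement_satisfies_G3_general P hP A B hA hB hcard
end

section
/- (Proposition 1: the class of optimal and near optimal sets satisfies G3.) Let V be a finite type and F : Finset V → ℝ a supermodular, antitone set function. Let F_min < F_max be real numbers and define the rank ρ(A) = (F_max − F(A)) / (F_max − F_min). For 0 < c ≤ 1 and 0 < K ≤ |V|, define L_{c,K} = {A ⊆ V : A ≠ ∅, |A| ≤ K, ρ(A) ≥ c}. Then L_{c,K} satisfies property G3: for any A, B ∈ L_{c,K} with |A| > |B|, there exists x ∈ A \ B such that B ∪ {x} ∈ L_{c,K}. -/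
/-- Membership in the class `L_{c,K}` of optimal and near optimal sets: `A` is nonempty,
has at most `K` elements, and its rank `ρ(A) = (F_max − F(A))/(F_max − F_min)` is at
least `c`. -/
def memL {V : Type*} [Fintype V] [DecidableEq V] (F : Finset V → ℝ)
    (Fmin Fmax c : ℝ) (K : ℕ) (A : Finset V) : Prop :=
  A.Nonempty ∧ A.card ≤ K ∧ c ≤ (Fmax - F A) / (Fmax - Fmin)

/-! Enlarging a set can only lower an antitone `F`, hence only raise its rank, so
membership in `L_{c,K}` is inherited by supersets within the size bound `K`. Any
`x ∈ A \ B` therefore works, since `|B ∪ {x}| ≤ |A| ≤ K`. -/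

theorem memL_of_subset {V : Type*} [Fintype V] [DecidableEq V] {F : Finset V → ℝ}
    (hanti : ∀ A B : Finset V, A ⊆ B → F B ≤ F A) {Fmin Fmax c : ℝ} (hminmax : Fmin < Fmax)
    {K : ℕ} {B B' : Finset V} (hB : memL F Fmin Fmax c K B) (hBB' : B ⊆ B')
    (hcard : B'.card ≤ K) : memL F Fmin Fmax c K B' := by
  obtain ⟨hne, -, hrank⟩ := hB
  refine ⟨hne.mono hBB', hcard, hrank.trans ?_⟩
  have hF : F B' ≤ F B := hanti B B' hBB'
  gcongr

theorem L_satisfies_G3_general {V : Type*} [Fintype V] [DecidableEq V]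
    (F : Finset V → ℝ)
    (hanti : ∀ A B : Finset V, A ⊆ B → F B ≤ F A)
    (Fmin Fmax : ℝ) (hminmax : Fmin < Fmax)
    (c : ℝ)
    (K : ℕ)
    (A B : Finset V)
    (hA : memL F Fmin Fmax c K A) (hB : memL F Fmin Fmax c K B)
    (hcard : B.card < A.card) :
    ∃ x ∈ A \ B, memL F Fmin Fmax c K (insert x B) := by
  obtain ⟨x, hxA, hxB⟩ := Finset.exists_mem_notMem_of_card_lt_card hcard
  refine ⟨x, Finset.mem_sdiff.mpr ⟨hxA, hxB⟩,
    memL_of_subset hanti hminmax hB (Finset.subset_insert x B) ?_⟩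
  rw [Finset.card_insert_of_notMem hxB]
  exact hcard.trans_le hA.2.1

/-- Proposition 1: for a supermodular antitone `F`, the class `L_{c,K}` of optimal and
near optimal sets satisfies the greedoid augmentation property G3. -/
theorem L_satisfies_G3 {V : Type*} [Fintype V] [DecidableEq V]
    (F : Finset V → ℝ)
    (hsuper : ∀ A B : Finset V, F A + F B ≤ F (A ∪ B) + F (A ∩ B))
    (hanti : ∀ A B : Finset V, A ⊆ B → F B ≤ F A)
    (Fmin Fmax : ℝ) (hminmax : Fmin < Fmax)
    (c : ℝ) (hc0 : 0 < c) (hc1 : c ≤ 1)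
    (K : ℕ) (hK0 : 0 < K) (hKN : K ≤ Fintype.card V)
    (A B : Finset V)
    (hA : memL F Fmin Fmax c K A) (hB : memL F Fmin Fmax c K B)
    (hcard : B.card < A.card) :
    ∃ x ∈ A \ B, memL F Fmin Fmax c K (insert x B) :=
  L_satisfies_G3_general F hanti Fmin Fmax hminmax c K A B hA hB hcard
end

section
/- (Iterated elemental curvature bound.) Let V be a finite type, ρ : Finset V → ℝ a monotone non-decreasing set function (A ⊆ B implies ρ(A) ≤ ρ(B)), and κ ≥ 0 a real number such that for all S ⊆ V and all distinct i, j ∉ S: ρ_i(S ∪ {j}) ≤ κ · ρ_i(S), where ρ_i(A) := ρ(A ∪ {i}) − ρ(A) denotes the marginal increase. Then for any S ⊆ V, any i ∉ S, and any set J ⊆ V disjoint from S ∪ {i}: ρ_i(S ∪ J) ≤ κ^{|J|} · ρ_i(S). -/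
open Finset

theorem iterated_elemental_curvature_general {V : Type*} [DecidableEq V]
    (ρ : Finset V → ℝ)
    (κ : ℝ) (hκ : 0 ≤ κ)
    (hcurv : ∀ (S : Finset V) (i j : V), i ≠ j → i ∉ S → j ∉ S →
      ρ (insert i (insert j S)) - ρ (insert j S) ≤ κ * (ρ (insert i S) - ρ S))
    (S : Finset V) (i : V) (hi : i ∉ S)
    (J : Finset V) (hJ : Disjoint J (insert i S)) :
    ρ (insert i (S ∪ J)) - ρ (S ∪ J) ≤ κ ^ J.card * (ρ (insert i S) - ρ S) := by
  induction J using Finset.induction_on with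
  | empty => simp
  | insert j J hjJ ih =>
    rw [disjoint_insert_left, mem_insert, not_or] at hJ
    obtain ⟨⟨hji, hjS⟩, hJ⟩ := hJ
    have hiJ : i ∉ J := fun h => disjoint_left.mp hJ h (mem_insert_self i S)
    calc ρ (insert i (S ∪ insert j J)) - ρ (S ∪ insert j J)
        = ρ (insert i (insert j (S ∪ J))) - ρ (insert j (S ∪ J)) := by rw [union_insert]
      _ ≤ κ * (ρ (insert i (S ∪ J)) - ρ (S ∪ J)) :=
        hcurv _ i j (Ne.symm hji) (by simp [hi, hiJ]) (by simp [hjS, hjJ])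
      _ ≤ κ * (κ ^ J.card * (ρ (insert i S) - ρ S)) := mul_le_mul_of_nonneg_left (ih hJ) hκ
      _ = κ ^ (insert j J).card * (ρ (insert i S) - ρ S) := by
        rw [card_insert_of_notMem hjJ, pow_succ']
        ring

/-- Iterated elemental curvature bound: if `ρ` is monotone non-decreasing and `κ ≥ 0`
satisfies `ρ_i(S ∪ {j}) ≤ κ · ρ_i(S)` for all `S` and distinct `i, j ∉ S` (where
`ρ_i(A) = ρ(A ∪ {i}) − ρ(A)`), then for any `S`, `i ∉ S`, and `J` disjoint from
`S ∪ {i}`, `ρ_i(S ∪ J) ≤ κ^{|J|} · ρ_i(S)`. -/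
theorem iterated_elemental_curvature {V : Type*} [Fintype V] [DecidableEq V]
    (ρ : Finset V → ℝ)
    (hmono : ∀ A B : Finset V, A ⊆ B → ρ A ≤ ρ B)
    (κ : ℝ) (hκ : 0 ≤ κ)
    (hcurv : ∀ (S : Finset V) (i j : V), i ≠ j → i ∉ S → j ∉ S →
      ρ (insert i (insert j S)) - ρ (insert j S) ≤ κ * (ρ (insert i S) - ρ S))
    (S : Finset V) (i : V) (hi : i ∉ S)
    (J : Finset V) (hJ : Disjoint J (insert i S)) :
    ρ (insert i (S ∪ J)) - ρ (S ∪ J) ≤ κ ^ J.card * (ρ (insert i S) - ρ S) :=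
  iterated_elemental_curvature_general ρ κ hκ hcurv S i hi J hJ
end

section
/- (Inequality (12): curvature bound on the rank gap.) Let V be a finite type, ρ : Finset V → ℝ a monotone non-decreasing set function, and κ ≥ 0 a real number such that for all S ⊆ V and all distinct i, j ∉ S: ρ_i(S ∪ {j}) ≤ κ · ρ_i(S), where ρ_i(A) := ρ(A ∪ {i}) − ρ(A). Then for any S ⊆ T ⊆ V and any enumeration j_1, …, j_r of the elements of T \ S (where r = |T \ S|): ρ(T) − ρ(S) ≤ Σ_{t=1}^{r} κ^{t−1} · ρ_{j_t}(S). -/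
/-! Peeling off the first element `a` of the enumeration leaves the marginal gain of `a` at `S`
plus the rank gap above `insert a S`; by induction the latter is a `κ`-weighted sum of gains at
`insert a S`, and one application of the curvature bound moves each of them down to `S` at the
cost of one more factor `κ`. -/

section Curvature

open Finset

variable {V : Type*} [DecidableEq V]

def marginalGain (ρ : Finset V → ℝ) (i : V) (A : Finset V) : ℝ :=
  ρ (insert i A) - ρ A

variable {ρ : Finset V → ℝ} {κ : ℝ}

theorem sum_pow_mul_marginalGain_insert_le (hκ : 0 ≤ κ)
    (hcurv : ∀ (S : Finset V) (i j : V), i ≠ j → i ∉ S → j ∉ S →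
      marginalGain ρ i (insert j S) ≤ κ * marginalGain ρ i S)
    {S : Finset V} {a : V} {l : List V} (haS : a ∉ S) (hal : a ∉ l) (hlS : ∀ x ∈ l, x ∉ S) :
    ∑ t : Fin l.length, κ ^ (t : ℕ) * marginalGain ρ (l.get t) (insert a S) ≤
      ∑ t : Fin l.length, κ ^ ((t : ℕ) + 1) * marginalGain ρ (l.get t) S := by
  refine sum_le_sum fun t _ => ?_
  have hmem : l.get t ∈ l := l.get_mem t
  calc κ ^ (t : ℕ) * marginalGain ρ (l.get t) (insert a S)
      ≤ κ ^ (t : ℕ) * (κ * marginalGain ρ (l.get t) S) := by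
        gcongr
        exact hcurv S _ a (ne_of_mem_of_not_mem hmem hal) (hlS _ hmem) haS
    _ = κ ^ ((t : ℕ) + 1) * marginalGain ρ (l.get t) S := by ring

theorem sub_le_sum_pow_mul_marginalGain (hκ : 0 ≤ κ)
    (hcurv : ∀ (S : Finset V) (i j : V), i ≠ j → i ∉ S → j ∉ S →
      marginalGain ρ i (insert j S) ≤ κ * marginalGain ρ i S)
    (l : List V) (hl : l.Nodup) (S : Finset V) (hlS : ∀ x ∈ l, x ∉ S) :
    ρ (S ∪ l.toFinset) - ρ S ≤
      ∑ t : Fin l.length, κ ^ (t : ℕ) * marginalGain ρ (l.get t) S := by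
  induction l generalizing S with
  | nil => simp
  | cons a l ih =>
    obtain ⟨hal, hl⟩ := List.nodup_cons.mp hl
    have haS : a ∉ S := hlS a List.mem_cons_self
    have hlaS : ∀ x ∈ l, x ∉ insert a S := fun x hx =>
      mem_insert.not.mpr <| not_or.mpr
        ⟨ne_of_mem_of_not_mem hx hal, hlS x (List.mem_cons_of_mem a hx)⟩
    have hunion : S ∪ (a :: l).toFinset = insert a S ∪ l.toFinset := by
      rw [List.toFinset_cons, union_insert, insert_union]
    have hrest := (ih hl (insert a S) hlaS).trans
      (sum_pow_mul_marginalGain_insert_le hκ hcurv haS hal fun x hx => hlS x (.tail a hx))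
    rw [hunion]
    simp only [List.length_cons, Fin.sum_univ_succ, List.get_cons_zero, List.get_cons_succ',
      Fin.val_zero, Fin.val_succ, pow_zero, one_mul]
    unfold marginalGain at hrest ⊢
    linarith

end Curvature

theorem curvature_rank_gap_bound_general {V : Type*} [DecidableEq V]
    (ρ : Finset V → ℝ)
    (κ : ℝ) (hκ : 0 ≤ κ)
    (hcurv : ∀ (S : Finset V) (i j : V), i ≠ j → i ∉ S → j ∉ S →
      ρ (insert i (insert j S)) - ρ (insert j S) ≤ κ * (ρ (insert i S) - ρ S))
    (S T : Finset V) (hST : S ⊆ T)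
    (j : List V) (hnodup : j.Nodup) (henum : j.toFinset = T \ S) :
    ρ T - ρ S ≤ ∑ t : Fin j.length, κ ^ (t : ℕ) * (ρ (insert (j.get t) S) - ρ S) := by
  have hjS : ∀ x ∈ j, x ∉ S := fun x hx =>
    (Finset.mem_sdiff.mp (henum ▸ List.mem_toFinset.mpr hx)).2
  have hT : S ∪ j.toFinset = T := by rw [henum, Finset.union_sdiff_of_subset hST]
  have hgap := sub_le_sum_pow_mul_marginalGain hκ hcurv j hnodup S hjS
  rwa [hT] at hgap

/-- Inequality (12): for a monotone non-decreasing `ρ` with elemental curvature bound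
`κ ≥ 0` (i.e. `ρ_i(S ∪ {j}) ≤ κ · ρ_i(S)` for all `S` and distinct `i, j ∉ S`, where
`ρ_i(A) = ρ(A ∪ {i}) − ρ(A)`), for any `S ⊆ T` and any enumeration `j₁, …, j_r` of
`T \ S`, we have `ρ(T) − ρ(S) ≤ Σ_{t=1}^{r} κ^{t−1} ρ_{j_t}(S)`. -/
theorem curvature_rank_gap_bound {V : Type*} [Fintype V] [DecidableEq V]
    (ρ : Finset V → ℝ)
    (hmono : ∀ A B : Finset V, A ⊆ B → ρ A ≤ ρ B)
    (κ : ℝ) (hκ : 0 ≤ κ)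
    (hcurv : ∀ (S : Finset V) (i j : V), i ≠ j → i ∉ S → j ∉ S →
      ρ (insert i (insert j S)) - ρ (insert j S) ≤ κ * (ρ (insert i S) - ρ S))
    (S T : Finset V) (hST : S ⊆ T)
    (j : List V) (hnodup : j.Nodup) (henum : j.toFinset = T \ S) :
    ρ T - ρ S ≤ ∑ t : Fin j.length, κ ^ (t : ℕ) * (ρ (insert (j.get t) S) - ρ S) :=
  curvature_rank_gap_bound_general ρ κ hκ hcurv S T hST j hnodup henum
end

section
/- (Inequality (13): lower bound on the rank of a subset.) Let V be a finite type, ρ : Finset V → ℝ a monotone non-decreasing set function, and κ ≥ 0 a real number such that for all S ⊆ V and all distinct i, j ∉ S: ρ_i(S ∪ {j}) ≤ κ · ρ_i(S), where ρ_i(A) := ρ(A ∪ {i}) − ρ(A). Let S ⊆ T ⊆ V with T \ S = {j_1, …, j_r}, suppose ρ(T) = 1, and let γ ≥ 0 satisfy ρ_{j_t}(S) ≤ γ for all t = 1, …, r. Then ρ(S) ≥ 1 − γ · Σ_{t=1}^{r} κ^{t−1}. -/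
/-!
Adding the elements of `D = T \ S` to `S` one at a time, the `t`-th added element `j` has
marginal gain at most `κ ^ t · ρ_j(S) ≤ κ ^ t · γ`, by applying the curvature bound once for
each of the `t` elements added before it. Telescoping gives
`ρ(T) - ρ(S) ≤ γ · ∑_{t < |D|} κ ^ t`.
-/

open Finset

section

variable {V : Type*} [DecidableEq V]

def marginal (ρ : Finset V → ℝ) (i : V) (A : Finset V) : ℝ :=
  ρ (insert i A) - ρ A

def IsElementalCurvatureBound (ρ : Finset V → ℝ) (κ : ℝ) : Prop :=
  ∀ (S : Finset V) (i j : V), i ≠ j → i ∉ S → j ∉ S →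
    marginal ρ i (insert j S) ≤ κ * marginal ρ i S

namespace IsElementalCurvatureBound

variable {ρ : Finset V → ℝ} {κ : ℝ}

theorem marginal_union_le (h : IsElementalCurvatureBound ρ κ) (hκ : 0 ≤ κ)
    {S B : Finset V} {i : V} (hiS : i ∉ S) (hiB : i ∉ B) (hBS : Disjoint B S) :
    marginal ρ i (S ∪ B) ≤ κ ^ #B * marginal ρ i S := by
  induction B using Finset.induction_on with
  | empty => simp
  | @insert j B hjB ih =>
    rw [mem_insert, not_or] at hiB
    rw [disjoint_insert_left] at hBS
    have hjSB : j ∉ S ∪ B := by simp [hBS.1, hjB]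
    have hiSB : i ∉ S ∪ B := by simp [hiS, hiB.2]
    rw [union_insert, card_insert_of_notMem hjB, pow_succ']
    calc marginal ρ i (insert j (S ∪ B))
        ≤ κ * marginal ρ i (S ∪ B) := h _ i j hiB.1 hiSB hjSB
      _ ≤ κ * (κ ^ #B * marginal ρ i S) := mul_le_mul_of_nonneg_left (ih hiB.2 hBS.2) hκ
      _ = κ * κ ^ #B * marginal ρ i S := (mul_assoc _ _ _).symm

theorem union_sub_le (h : IsElementalCurvatureBound ρ κ) (hκ : 0 ≤ κ)
    {S D : Finset V} {γ : ℝ} (hDS : Disjoint D S) (hmarg : ∀ j ∈ D, marginal ρ j S ≤ γ) :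
    ρ (S ∪ D) - ρ S ≤ γ * ∑ t ∈ range #D, κ ^ t := by
  induction D using Finset.induction_on with
  | empty => simp
  | @insert j D hjD ih =>
    rw [disjoint_insert_left] at hDS
    have hlast : marginal ρ j (S ∪ D) ≤ κ ^ #D * γ :=
      (h.marginal_union_le hκ hDS.1 hjD hDS.2).trans
        (mul_le_mul_of_nonneg_left (hmarg j (mem_insert_self j D)) (pow_nonneg hκ _))
    have hrest := ih hDS.2 fun b hb => hmarg b (mem_insert_of_mem hb)
    rw [union_insert, card_insert_of_notMem hjD, sum_range_succ]
    unfold marginal at hlast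
    linarith

end IsElementalCurvatureBound

end

theorem rank_lower_bound_general {V : Type*} [DecidableEq V]
    (ρ : Finset V → ℝ)
    (κ : ℝ) (hκ : 0 ≤ κ)
    (hcurv : ∀ (S : Finset V) (i j : V), i ≠ j → i ∉ S → j ∉ S →
      ρ (insert i (insert j S)) - ρ (insert j S) ≤ κ * (ρ (insert i S) - ρ S))
    (S T : Finset V) (hST : S ⊆ T) (hT : ρ T = 1)
    (γ : ℝ)
    (hmarg : ∀ j ∈ T \ S, ρ (insert j S) - ρ S ≤ γ) :
    1 - γ * ∑ t ∈ Finset.range (T \ S).card, κ ^ t ≤ ρ S := by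
  have hgain := IsElementalCurvatureBound.union_sub_le hcurv hκ sdiff_disjoint hmarg
  rw [union_sdiff_of_subset hST, hT] at hgain
  linarith

/-- Inequality (13): for a monotone non-decreasing `ρ` with elemental curvature bound
`κ ≥ 0` (i.e. `ρ_i(S ∪ {j}) ≤ κ · ρ_i(S)` for all `S` and distinct `i, j ∉ S`, where
`ρ_i(A) = ρ(A ∪ {i}) − ρ(A)`), if `S ⊆ T`, `ρ(T) = 1`, `r = |T \ S|`, and every
marginal `ρ_j(S)` for `j ∈ T \ S` is at most `γ ≥ 0`, then
`ρ(S) ≥ 1 − γ · Σ_{t=1}^{r} κ^{t−1}`. -/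
theorem rank_lower_bound {V : Type*} [Fintype V] [DecidableEq V]
    (ρ : Finset V → ℝ)
    (hmono : ∀ A B : Finset V, A ⊆ B → ρ A ≤ ρ B)
    (κ : ℝ) (hκ : 0 ≤ κ)
    (hcurv : ∀ (S : Finset V) (i j : V), i ≠ j → i ∉ S → j ∉ S →
      ρ (insert i (insert j S)) - ρ (insert j S) ≤ κ * (ρ (insert i S) - ρ S))
    (S T : Finset V) (hST : S ⊆ T) (hT : ρ T = 1)
    (γ : ℝ) (hγ : 0 ≤ γ)
    (hmarg : ∀ j ∈ T \ S, ρ (insert j S) - ρ S ≤ γ) :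
    1 - γ * ∑ t ∈ Finset.range (T \ S).card, κ ^ t ≤ ρ S :=
  rank_lower_bound_general ρ κ hκ hcurv S T hST hT γ hmarg
end
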